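/- For every integer x ≥ 9, f(x) ≤ x − ⌊√x⌋, where ⌊√x⌋ denotes the integer square root of x (the largest y with y² ≤ x). -/

import Mathlib

/-- Fuel-based helper for the recursive function `f`. For `k ≤ fuel`, `faux fuel k`
computes the value of `f k`. -/
def faux : ℕ → ℕ → ℕ
  | 0, _ => 1
  | fuel + 1, k =>
    if k ≤ 2 then 1
    else if k ≤ 4 then 2
    else
      min (faux fuel (k - 1) + 1)
        (((List.range k).filter (fun k1 => 3 ≤ k1 ∧ k1 ∣ k)).foldr
          (fun k1 acc => min (k - k1 - k / k1 + 1 + max (faux fuel k1) (k / k1)) acc)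
          (faux fuel (k - 1) + 1))

/-- `f 1 = 1`, `f 2 = 1`, `f 3 = 2`, `f 4 = 2`, and for `k > 4`,
`f k = min (f (k-1) + 1)
          (min over factorizations k = k₁·k₂ with 3 ≤ k₁ < k, 2 ≤ k₂ of
             k₁·k₂ - k₁ - k₂ + 1 + max (f k₁) k₂)`,
where the inner minimum is omitted when no such factorization exists.
(Note: for a divisor `k₁` of `k` with `3 ≤ k₁ < k`, the cofactor `k₂ = k / k₁`
automatically satisfies `k₂ ≥ 2`.) -/
def f (k : ℕ) : ℕ := faux k k

/-
Write s = ⌊√x⌋ ≥ 3. Peeling off one step at a time gives f(k) ≤ k - 2 for k ≥ 4, and more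
generally f(n) ≤ f(m) + (n - m) for 4 ≤ m ≤ n. The factorization s² - 1 = (s + 1)(s - 1) has
f(s + 1) ≤ s - 1, so its term in the recursion is (s² - 1) - (s + 1) - (s - 1) + 1 + (s - 1),
i.e. f(s² - 1) ≤ s² - 1 - s. Walking up from s² - 1 to x ≥ s² costs at most x - (s² - 1).
-/

theorem faux_eq_faux_of_le : ∀ {n m k : ℕ}, k ≤ n → k ≤ m → faux n k = faux m k
  | 0, 0, _, _, _ => rfl
  | 0, _ + 1, k, hn, _ => by
    obtain rfl : k = 0 := by omega
    simp [faux]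
  | _ + 1, 0, k, _, hm => by
    obtain rfl : k = 0 := by omega
    simp [faux]
  | n + 1, m + 1, k, hn, hm => by
    simp only [faux]
    split_ifs
    · rfl
    · rfl
    · rw [faux_eq_faux_of_le (n := n) (m := m) (by omega) (by omega)]
      congr 1
      refine List.foldr_ext _ _ _ fun k₁ hk₁ _ => ?_
      have : k₁ < k := List.mem_range.mp (List.mem_filter.mp hk₁).1
      rw [faux_eq_faux_of_le (n := n) (m := m) (by omega) (by omega)]

theorem faux_eq_f {fuel k : ℕ} (h : k ≤ fuel) : faux fuel k = f k :=
  faux_eq_faux_of_le h le_rfl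

theorem f_eq {k : ℕ} (hk : 5 ≤ k) :
    f k = min (f (k - 1) + 1)
      (((List.range k).filter (fun k₁ => 3 ≤ k₁ ∧ k₁ ∣ k)).foldr
        (fun k₁ acc => min (k - k₁ - k / k₁ + 1 + max (f k₁) (k / k₁)) acc)
        (f (k - 1) + 1)) := by
  obtain ⟨n, rfl⟩ : ∃ n, k = n + 1 := ⟨k - 1, by omega⟩
  rw [f, faux, if_neg (by omega), if_neg (by omega), faux_eq_f (by omega)]
  congr 1
  refine List.foldr_ext _ _ _ fun k₁ hk₁ _ => ?_
  rw [faux_eq_f (by simpa using (List.mem_filter.mp hk₁).1)]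

theorem List.foldr_min_le_of_mem {α β : Type*} [LinearOrder β] {g : α → β} {l : List α} {a : α}
    (init : β) (ha : a ∈ l) : l.foldr (fun x acc => min (g x) acc) init ≤ g a := by
  induction l with
  | nil => cases ha
  | cons b t ih =>
    rcases List.mem_cons.mp ha with rfl | h
    · exact min_le_left _ _
    · exact (min_le_right _ _).trans (ih h)

theorem f_succ_le {k : ℕ} (hk : 4 ≤ k) : f (k + 1) ≤ f k + 1 := by
  rw [f_eq (by omega)]
  exact min_le_left _ _

theorem f_le_add_sub {m n : ℕ} (hm : 4 ≤ m) (hmn : m ≤ n) : f n ≤ f m + (n - m) := by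
  induction n, hmn using Nat.le_induction with
  | base => simp
  | succ n hmn ih => exact (f_succ_le (by omega)).trans (by omega)

theorem f_le_sub_two {k : ℕ} (hk : 4 ≤ k) : f k ≤ k - 2 := by
  have h := f_le_add_sub le_rfl hk
  have h4 : f 4 = 2 := rfl
  omega

theorem f_mul_le {a b : ℕ} (ha : 3 ≤ a) (hb : 2 ≤ b) :
    f (a * b) ≤ a * b - a - b + 1 + max (f a) b := by
  have hab : 6 ≤ a * b := Nat.mul_le_mul ha hb
  have hdiv : a * b / a = b := Nat.mul_div_cancel_left b (by omega)
  have hmem : a ∈ (List.range (a * b)).filter (fun k₁ => 3 ≤ k₁ ∧ k₁ ∣ a * b) := by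
    simp only [List.mem_filter, List.mem_range, decide_eq_true_eq]
    exact ⟨by nlinarith, ha, dvd_mul_right a b⟩
  rw [f_eq (by omega)]
  refine (min_le_right _ _).trans ?_
  simpa only [hdiv] using List.foldr_min_le_of_mem (g := fun k₁ =>
    a * b - k₁ - a * b / k₁ + 1 + max (f k₁) (a * b / k₁)) _ hmem

theorem f_mul_self_sub_one_le {s : ℕ} (hs : 3 ≤ s) : f (s * s - 1) ≤ s * s - 1 - s := by
  have hfac : s * s - 1 = (s + 1) * (s - 1) := Nat.mul_self_sub_mul_self_eq s 1
  have hmax : max (f (s + 1)) (s - 1) = s - 1 :=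
    max_eq_right ((f_le_sub_two (by omega)).trans_eq (by omega))
  have h := f_mul_le (a := s + 1) (b := s - 1) (by omega) (by omega)
  rw [hmax, ← hfac] at h
  have : 3 * s ≤ s * s := Nat.mul_le_mul_right s hs
  generalize s * s = q at *
  omega

/-- For every integer `x ≥ 9`, `f x ≤ x - ⌊√x⌋`, where `⌊√x⌋` is the integer
square root of `x` (the largest `y` with `y² ≤ x`). -/
theorem stmt_5 (x : ℕ) (hx : 9 ≤ x) :
    f x ≤ x - Nat.sqrt x := by
  generalize hs_def : Nat.sqrt x = s
  have hs : 3 ≤ s := hs_def ▸ Nat.le_sqrt.mpr hx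
  have hsx : s * s ≤ x := hs_def ▸ Nat.sqrt_le x
  have hs_sq : 3 * s ≤ s * s := Nat.mul_le_mul_right s hs
  have h := f_le_add_sub (m := s * s - 1) (n := x) (by omega) (by omega)
  have := f_mul_self_sub_one_le hs
  generalize s * s = q at *
  omega
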